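/- Let F denote the initial Fitting ideal of the ℤ[G]-module 𝓘_I/g̃𝓘_I, i.e. the ideal of ℤ[G] generated by the s×s minors of the presentation matrix of 𝓘_I/g̃𝓘_I on the generators τ_1,…,τ_s obtained from M_s(ν_1,…,ν_s,τ_1,…,τ_s) by appending the s rows g̃·e_l (1 ≤ l ≤ s). Then one has the equality of ideals of ℤ[G]: (#I − ν_I·φ̃^{-1} + #I·ν_I) · F = g̃ · ( #I·ν_I·ℤ[G] + (#I − ν_I·φ̃^{-1})·𝓙 ). (This is Theorem 1.3 of the paper, h·SFitt¹_{ℤ[G]}(A) = (ν_I, (1 − (ν_I/#I)φ^{-1})𝓙) for A = ℤ[G/I]/(g) and h = 1 − (ν_I/#I)φ̃^{-1} + ν_I ∈ ℚ[G], with denominators cleared using SFitt¹_{ℤ[G]}(A) = g̃^{-1}·F.) -/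

import Mathlib

open MonoidAlgebra Finset

/-- The sum `ν_H = Σ_{σ ∈ H} σ` of the elements of a subgroup `H` in the group algebra. -/
noncomputable def nuElt (R : Type) [CommRing R] {G : Type} [CommGroup G] [Fintype G]
    (H : Subgroup G) : MonoidAlgebra R G :=
  letI := Classical.decPred (· ∈ H)
  ∑ σ ∈ Finset.univ.filter (· ∈ H), MonoidAlgebra.of R G σ

/-- `Fitt_i(A)`: the ideal generated by the `(n-i) × (n-i)` minors of a matrix `A`
with `n` columns (so `Fitt_i(A) = (1)` for `i ≥ n`, and `(0)` if `A` has fewer than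
`n - i` rows). -/
noncomputable def fittMat {R : Type} [CommRing R] {m n : Type} [Fintype m] [Fintype n]
    (A : Matrix m n R) (i : ℕ) : Ideal R :=
  Ideal.span {x : R |
    ∃ (r : Fin (Fintype.card n - i) → m) (c : Fin (Fintype.card n - i) → n),
      x = (A.submatrix r c).det}

/-- The index type for the rows of `N_s`: pairs `l < l'`. -/
abbrev rowPairs (s : ℕ) := {p : Fin s × Fin s // p.1 < p.2}

/-- The matrix `N_s(t_1, …, t_s)`: row `(l, l')` has `-t_{l'}` in column `l`,
`t_l` in column `l'`, and `0` elsewhere. -/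
noncomputable def Nmat {R : Type} [CommRing R] {s : ℕ} (t : Fin s → R) :
    Matrix (rowPairs s) (Fin s) R :=
  fun p l => if l = p.val.1 then -t p.val.2 else if l = p.val.2 then t p.val.1 else 0

/-- The matrix `M_s(ν_1, …, ν_s, τ_1, …, τ_s)`: `N_s(τ_1, …, τ_s)` with `s` extra rows
appended, the `l`-th of which has `ν_l` in column `l` and `0` elsewhere. -/
noncomputable def Mmat {R : Type} [CommRing R] {s : ℕ} (ν t : Fin s → R) :
    Matrix (Fin s ⊕ rowPairs s) (Fin s) R :=
  Sum.elim (fun l l' => if l' = l then ν l else 0) (Nmat t)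

/-- `I = I_1 × ⋯ × I_s` where `I_l` is the (possibly trivial) cyclic subgroup generated
by `σ l`: every element of `I` is, in a unique way, the product of elements of the
subgroups `⟨σ l⟩`. -/
def IsDecomp {G : Type} [CommGroup G] (I : Subgroup G) {s : ℕ} (σ : Fin s → G) : Prop :=
  (∀ l, σ l ∈ I) ∧
    ∀ g ∈ I, ∃! x : ∀ l, Subgroup.zpowers (σ l), (∏ l, ((x l : G))) = g

/-- The ideal `Z_i` generated by the products `ν_{l_1} ⋯ ν_{l_{s-i}}` over all
`(s-i)`-element subsets `{l_1 < ⋯ < l_{s-i}}` of `{1, …, s}`. -/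
noncomputable def Zideal {G : Type} [CommGroup G] [Fintype G] {s : ℕ} (σ : Fin s → G)
    (i : ℕ) : Ideal (MonoidAlgebra ℤ G) :=
  Ideal.span {x | ∃ T : Finset (Fin s), T.card = s - i ∧
    x = ∏ l ∈ T, nuElt ℤ (Subgroup.zpowers (σ l))}

/-- The augmentation-type kernel ideal `𝓘_H = ker(ℤ[G] → ℤ[G/H])`. -/
noncomputable def kerIdeal {G : Type} [CommGroup G] [Fintype G] (H : Subgroup G) :
    Ideal (MonoidAlgebra ℤ G) :=
  RingHom.ker (MonoidAlgebra.mapDomainRingHom ℤ (QuotientGroup.mk' H))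

/-!
The argument works over any commutative ring, for elements `ν_l`, `τ_l`, `n`, `u` with
`ν_l τ_l = 0`, `n - ν ∈ (τ_1, …, τ_s)` where `ν = ∏ ν_l`, and `n ∈ (ν_l, τ_l)` for every `l`, and
with `K = (1 - u, τ_1, …, τ_s)` in place of `𝓘_D`. In `ℤ[G]` (with `n = #I`, `u = φ̃⁻¹`) these
follow from `I = I_1 × ⋯ × I_s`, Lagrange's theorem, and the fact that `I` and `φ̃` generate `D`.

Put `g = 1 - u + n`, `q = n - ν u` and `h = q + n ν`. Since `ν² = n ν`, one has `h ν = g · n ν` and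
`g q = h (g - ν)`, so `⊇` amounts to `ν ∈ F` and `g 𝓙 ⊆ F`. Whenever `c ≥ 1` and
`#A + c + Σ m_l = s`, the element `ν_A g^c ∏ τ_l^{m_l}` is, up to sign, a triangular minor: rows
`ν_l e_l` for `l ∈ A`, rows `g e_l` for `c` further columns, and for each remaining column the
edge row joining it to its parent in a forest with in-degrees `m`. Replacing a generator
`1 - u = g - n` of `K` by `g`, `ν_l` or `τ_l` (using `n ∈ (ν_l, τ_l)` for some `l ∉ A`) then
gives `g Z_{i+1} K^i ⊆ F`.

For `⊆`, every entry of a row of the presentation matrix lies in `(ν_l)`, `(τ_1, …, τ_s)` or `(g)`,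
so each minor lies in the product of these ideals over its rows. Counting rows, and using
`g ∈ K + (ν)` and `ν τ_l = 0`, this product is contained in `(ν)` or in `g 𝓙`, except when the
minor uses an edge row but no `g`-row. Such a minor is killed by `ν`, and also by every `τ_l` by
Cramer's rule, because `M_s τ = 0`; hence it is killed by `h = (n - ν) + g ν`.
-/

open scoped Matrix

namespace Matrix

variable {R : Type*} [CommRing R] {n : Type*} [Fintype n] [DecidableEq n]

theorem det_mem_prod_of_forall_mem (M : Matrix n n R) (I : n → Ideal R)
    (h : ∀ i j, M i j ∈ I i) : M.det ∈ ∏ i, I i := by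
  rw [det_apply]
  refine Submodule.sum_mem _ fun π _ => ?_
  rw [Units.smul_def, zsmul_eq_mul, ← Equiv.prod_comp π I]
  exact Ideal.mul_mem_left _ _ (Ideal.prod_mem_prod fun i _ => h _ _)

theorem mul_det_eq_zero_of_mulVec_eq_zero (M : Matrix n n R) {x : n → R} (h : M *ᵥ x = 0)
    (j : n) : x j * M.det = 0 := by
  have := congrFun (congrArg (adjugate M *ᵥ ·) h) j
  simpa [mulVec_mulVec, adjugate_mul, smul_mulVec, mul_comm] using this

theorem det_eq_prod_diag_of_lt (M : Matrix n n R) (b : n → ℕ)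
    (hb : ∀ i j, i ≠ j → M i j ≠ 0 → b i < b j) : M.det = ∏ i, M i i := by
  rw [det_apply, Finset.sum_eq_single 1 (fun π _ hπ => ?_) (by simp)]
  · simp
  suffices ∃ i, M (π i) i = 0 by
    obtain ⟨i, hi⟩ := this
    rw [Finset.prod_eq_zero (f := fun j => M (π j) j) (Finset.mem_univ i) hi, smul_zero]
  -- otherwise `b ∘ π < b` off the fixed points of `π`, contradicting `∑ b ∘ π = ∑ b`
  by_contra! hne
  obtain ⟨i₀, hi₀⟩ : ∃ i, π i ≠ i := by
    by_contra! hfix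
    exact hπ (Equiv.ext hfix)
  have hlt : ∀ i, π i ≠ i → b (π i) < b i := fun i hi => hb _ _ hi (hne i)
  have : ∑ i, b (π i) < ∑ i, b i :=
    Finset.sum_lt_sum (fun i _ => by
        by_cases hi : π i = i
        · rw [hi]
        · exact (hlt i hi).le)
      ⟨i₀, Finset.mem_univ _, hlt i₀ hi₀⟩
  rw [Equiv.sum_comp π b] at this
  exact lt_irrefl _ this

end Matrix

section Fitting

variable {R : Type} [CommRing R] {m n : Type} [Fintype m] [Fintype n] [DecidableEq n]
  (A : Matrix m n R)

theorem det_submatrix_mem_fittMat_zero (r : n → m) (c : n → n) :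
    (A.submatrix r c).det ∈ fittMat A 0 := by
  let e : Fin (Fintype.card n - 0) ≃ n :=
    (finCongr (Nat.sub_zero _)).trans (Fintype.equivFin n).symm
  refine Ideal.subset_span ⟨r ∘ e, c ∘ e, ?_⟩
  exact (Matrix.det_submatrix_equiv_self e (A.submatrix r c)).symm

theorem fittMat_zero_le {P : Ideal R}
    (h : ∀ (r : n → m) (c : n → n), (A.submatrix r c).det ∈ P) : fittMat A 0 ≤ P := by
  refine Ideal.span_le.2 ?_
  rintro _ ⟨r, c, rfl⟩
  let e : n ≃ Fin (Fintype.card n - 0) :=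
    (Fintype.equivFin n).trans (finCongr (Nat.sub_zero _).symm)
  rw [← Matrix.det_submatrix_equiv_self e]
  exact h (r ∘ e) (c ∘ e)

end Fitting

namespace Ideal

variable {R : Type*} [CommRing R]

theorem sup_pow_le_pow_sup (K N : Ideal R) (k : ℕ) : (K ⊔ N) ^ k ≤ K ^ k ⊔ N := by
  induction k with
  | zero => exact le_sup_left
  | succ k ih =>
    calc (K ⊔ N) ^ (k + 1) = (K ⊔ N) ^ k * (K ⊔ N) := pow_succ _ _
      _ ≤ (K ^ k ⊔ N) * (K ⊔ N) := mul_mono_left ih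
      _ ≤ K ^ (k + 1) ⊔ N := by
        rw [sup_mul, mul_sup, pow_succ]
        exact sup_le (sup_le le_sup_left (le_sup_of_le_right mul_le_right))
          (le_sup_of_le_right mul_le_left)

theorem span_mul_le_of_forall {X : Set R} {N P : Ideal R}
    (h : ∀ x ∈ X, span {x} * N ≤ P) : span X * N ≤ P := by
  rw [mul_le]
  intro a ha b hb
  induction ha using Submodule.span_induction with
  | mem x hx => exact h x hx (mul_mem_mul (mem_span_singleton_self x) hb)
  | zero => simp
  | add a a' _ _ ha ha' => rw [add_mul]; exact add_mem ha ha'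
  | smul r a _ ha => rw [smul_eq_mul, mul_assoc]; exact P.mul_mem_left r ha

theorem sum_le_of_forall {ι : Type*} {t : Finset ι} {f : ι → Ideal R} {P : Ideal R}
    (h : ∀ i ∈ t, f i ≤ P) : ∑ i ∈ t, f i ≤ P := by
  refine Finset.sum_induction f (· ≤ P) (fun _ _ ha hb => ?_) bot_le h
  rw [Submodule.add_eq_sup]
  exact sup_le ha hb

theorem span_singleton_mul_span_mul_le {y : R} {S : Set R} {N P : Ideal R}
    (h : ∀ t ∈ S, span {y * t} * N ≤ P) : span {y} * span S * N ≤ P := by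
  rw [mul_comm (span {y}), mul_assoc]
  refine span_mul_le_of_forall fun t ht => ?_
  rw [← mul_assoc, span_singleton_mul_span_singleton, mul_comm t]
  exact h t ht

end Ideal

section Forest

variable {α : Type*} [Fintype α] [DecidableEq α]

theorem Finset.exists_parent_rank_of_erase {U : Finset α} {m : α → ℕ} {ρ w : α} (hρU : ρ ∉ U)
    (hρ : 0 < m ρ) (hwU : w ∈ U)
    (h : ∃ (p : α → α) (b : α → ℕ), (∀ u ∈ U.erase w, b u < b (p u)) ∧
      ∀ x, #{u ∈ U.erase w | p u = x} = Function.update m ρ (m ρ - 1) x) :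
    ∃ (p : α → α) (b : α → ℕ), (∀ u ∈ U, b u < b (p u)) ∧ ∀ x, #{u ∈ U | p u = x} = m x := by
  obtain ⟨p, b, hb, hfib⟩ := h
  refine ⟨Function.update p w ρ, Function.update b ρ (Finset.univ.sup b + 1), fun u hu => ?_,
    fun x => ?_⟩
  · have hbig : ∀ v, b v < Finset.univ.sup b + 1 :=
      fun v => Nat.lt_succ_of_le (Finset.le_sup (Finset.mem_univ v))
    have huρ : u ≠ ρ := ne_of_mem_of_not_mem hu hρU
    by_cases huw : u = w
    · subst huw
      simp [huρ, hbig]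
    · rw [Function.update_of_ne huw, Function.update_of_ne huρ]
      by_cases hpu : p u = ρ
      · simp [hpu, hbig]
      · rw [Function.update_of_ne hpu]
        exact hb u (Finset.mem_erase.2 ⟨huw, hu⟩)
  · rw [Finset.card_filter, ← Finset.add_sum_erase _ _ hwU,
      Finset.sum_congr rfl fun u hu => by rw [Function.update_of_ne (Finset.ne_of_mem_erase hu)],
      ← Finset.card_filter, hfib, Function.update_self]
    by_cases hx : x = ρ
    · subst hx; simp; omega
    · simp [hx, Ne.symm hx]

theorem Finset.exists_parent_rank :
    ∀ (U : Finset α) (m : α → ℕ), ∑ x, m x = #U → (U.Nonempty → ∃ ρ ∉ U, 0 < m ρ) →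
      ∃ (p : α → α) (b : α → ℕ), (∀ u ∈ U, b u < b (p u)) ∧ ∀ x, #{u ∈ U | p u = x} = m x := by
  intro U
  induction hU : #U generalizing U with
  | zero =>
    intro m hm _
    rw [Finset.card_eq_zero.1 hU]
    refine ⟨id, 0, by simp, fun x => ?_⟩
    simp [(Finset.sum_eq_zero_iff.1 hm) x (Finset.mem_univ x)]
  | succ N ih =>
    intro m hm hroot
    obtain ⟨ρ, hρU, hρ⟩ := hroot (Finset.card_pos.1 (by omega))
    -- choosing `w` with `0 < m w` when possible leaves a root for `U.erase w`
    obtain ⟨w, hwU, hw⟩ : ∃ w ∈ U, (∃ v ∈ U, 0 < m v) → 0 < m w := by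
      by_cases h : ∃ v ∈ U, 0 < m v
      · obtain ⟨v, hv, hmv⟩ := h; exact ⟨v, hv, fun _ => hmv⟩
      · obtain ⟨v, hv⟩ := Finset.card_pos.1 (show 0 < #U by omega)
        exact ⟨v, hv, fun h' => absurd h' h⟩
    refine Finset.exists_parent_rank_of_erase hρU hρ hwU ?_
    set m' := Function.update m ρ (m ρ - 1) with hm'
    have hm'sum : ∑ x, m' x = N := by
      rw [← Finset.add_sum_erase _ m (Finset.mem_univ ρ)] at hm
      rw [hm', Finset.sum_update_of_mem (Finset.mem_univ ρ), Finset.sdiff_singleton_eq_erase]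
      omega
    have hU' : #(U.erase w) = N := by rw [Finset.card_erase_of_mem hwU]; omega
    refine ih (U.erase w) hU' m' hm'sum fun hne => ?_
    by_cases h : ∃ v ∈ U, 0 < m v
    · refine ⟨w, Finset.notMem_erase w U, ?_⟩
      rw [hm', Function.update_of_ne (ne_of_mem_of_not_mem hwU hρU)]
      exact hw h
    · push Not at h
      obtain ⟨x, -, hx⟩ := Finset.exists_ne_zero_of_sum_ne_zero
        (show ∑ x, m' x ≠ 0 by rw [hm'sum, ← hU']; exact (Finset.card_pos.2 hne).ne')
      refine ⟨x, fun hxU => hx ?_, Nat.pos_of_ne_zero hx⟩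
      rw [hm', Function.update_of_ne (ne_of_mem_of_not_mem (Finset.mem_of_mem_erase hxU) hρU)]
      exact Nat.le_zero.1 (h x (Finset.mem_of_mem_erase hxU))

end Forest

section PresentationMatrix

variable {R : Type} [CommRing R] {s : ℕ}

theorem Nmat_mem_span_range (t : Fin s → R) (p : rowPairs s) (j : Fin s) :
    Nmat t p j ∈ Ideal.span (Set.range t) := by
  unfold Nmat
  split_ifs
  · exact neg_mem (Ideal.subset_span ⟨_, rfl⟩)
  · exact Ideal.subset_span ⟨_, rfl⟩
  · exact zero_mem _

theorem Nmat_mulVec_self (t : Fin s → R) : Nmat t *ᵥ t = 0 := by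
  ext ⟨⟨i, j⟩, hij⟩
  have hne : j ≠ i := hij.ne'
  have hrow : ∀ k, Nmat t ⟨(i, j), hij⟩ k * t k
      = (if k = i then -t j * t i else 0) + (if k = j then t i * t j else 0) := by
    intro k
    by_cases hki : k = i
    · subst hki; simp [Nmat, hij.ne]
    · by_cases hkj : k = j
      · subst hkj; simp [Nmat, hne]
      · simp [Nmat, hki, hkj]
  simp only [Matrix.mulVec, dotProduct, hrow, Finset.sum_add_distrib, Finset.sum_ite_eq',
    Finset.mem_univ, if_true, Pi.zero_apply]
  ring

theorem Mmat_mulVec_self (ν t : Fin s → R) (h : ∀ l, ν l * t l = 0) : Mmat ν t *ᵥ t = 0 := by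
  ext (l | p)
  · show ∑ j, (if j = l then ν l else 0) * t j = 0
    simp [ite_mul, h]
  · exact congrFun (Nmat_mulVec_self t) p

noncomputable def presMat (ν τ : Fin s → R) (g : R) :
    Matrix ((Fin s ⊕ rowPairs s) ⊕ Fin s) (Fin s) R :=
  Sum.elim (Mmat ν τ) (fun l l' => if l' = l then g else 0)

variable (ν τ : Fin s → R) (g : R)

@[simp]
theorem presMat_inl_inl (l j : Fin s) :
    presMat ν τ g (.inl (.inl l)) j = if j = l then ν l else 0 := rfl

@[simp]
theorem presMat_inl_inr (p : rowPairs s) (j : Fin s) :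
    presMat ν τ g (.inl (.inr p)) j = Nmat τ p j := rfl

@[simp]
theorem presMat_inr (l j : Fin s) : presMat ν τ g (.inr l) j = if j = l then g else 0 := rfl

/-- The row of `N_s` for the pair `{i, j}`; the junk value for `i = j` is the row `ν_i e_i`. -/
def edgeRow (i j : Fin s) : (Fin s ⊕ rowPairs s) ⊕ Fin s :=
  if h : i < j then .inl (.inr ⟨(i, j), h⟩)
  else if h' : j < i then .inl (.inr ⟨(j, i), h'⟩) else .inl (.inl i)

theorem presMat_edgeRow_of_ne {i j k : Fin s} (hi : k ≠ i) (hj : k ≠ j) :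
    presMat ν τ g (edgeRow i j) k = 0 := by
  unfold edgeRow
  split_ifs <;> simp [Nmat, hi, hj]

theorem exists_mul_presMat_edgeRow_self {i j : Fin s} (hij : i ≠ j) :
    ∃ ε : R, ε * presMat ν τ g (edgeRow i j) i = τ j := by
  unfold edgeRow
  rcases lt_or_gt_of_ne hij with h | h
  · exact ⟨-1, by simp [dif_pos h, Nmat]⟩
  · exact ⟨1, by simp [dif_neg (not_lt.2 h.le), dif_pos h, Nmat, hij]⟩

def forestRow (A C : Finset (Fin s)) (p : Fin s → Fin s) (i : Fin s) :
    (Fin s ⊕ rowPairs s) ⊕ Fin s :=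
  if i ∈ A then .inl (.inl i) else if i ∈ C then .inr i else edgeRow i (p i)

theorem forestRow_of_mem_compl {A C : Finset (Fin s)} (p : Fin s → Fin s) {u : Fin s}
    (hu : u ∈ (A ∪ C)ᶜ) : forestRow A C p u = edgeRow u (p u) := by
  have : u ∉ A ∧ u ∉ C := by simpa [not_or] using hu
  simp [forestRow, this.1, this.2]

theorem det_submatrix_forestRow {A C : Finset (Fin s)} {p : Fin s → Fin s} {b : Fin s → ℕ}
    (hb : ∀ u ∈ (A ∪ C)ᶜ, b u < b (p u)) :
    ((presMat ν τ g).submatrix (forestRow A C p) id).det =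
      ∏ i, presMat ν τ g (forestRow A C p i) i := by
  refine Matrix.det_eq_prod_diag_of_lt _ b fun i k hik hS => ?_
  by_cases hiA : i ∈ A
  · simp [forestRow, hiA, hik.symm] at hS
  by_cases hiC : i ∈ C
  · simp [forestRow, hiA, hiC, hik.symm] at hS
  have hiU : i ∈ (A ∪ C)ᶜ := by simp [hiA, hiC]
  obtain rfl : k = p i := by
    by_contra hk
    exact hS (by simpa [forestRow_of_mem_compl p hiU] using
      presMat_edgeRow_of_ne ν τ g (Ne.symm hik) hk)
  exact hb i hiU

/-- Up to sign, `ν_A g^{#C} ∏ τ_l^{m_l}` is the minor on the rows `forestRow A C p` for a forest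
`p` on the remaining columns with in-degrees `m`: that minor is triangular when its columns are
ordered by rank, with diagonal entries `ν_l`, `g` and `±τ_{p u}`. -/
theorem prod_mul_pow_mul_prod_pow_mem_fittMat {A C : Finset (Fin s)} (hAC : Disjoint A C)
    (m : Fin s → ℕ) (hm : ∑ l, m l = #(A ∪ C)ᶜ)
    (hroot : (A ∪ C)ᶜ.Nonempty → ∃ ρ ∈ A ∪ C, 0 < m ρ) :
    (∏ l ∈ A, ν l) * g ^ #C * ∏ l, τ l ^ m l ∈ fittMat (presMat ν τ g) 0 := by
  obtain ⟨p, b, hb, hfib⟩ := Finset.exists_parent_rank (A ∪ C)ᶜ m hm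
    fun hne => (hroot hne).imp fun _ hρ => ⟨Finset.notMem_compl.2 hρ.1, hρ.2⟩
  set U := (A ∪ C)ᶜ
  set d : Fin s → R := fun i => presMat ν τ g (forestRow A C p i) i
  have hε : ∀ u ∈ U, ∃ ε, ε * d u = τ (p u) := fun u hu => by
    simpa [d, forestRow_of_mem_compl p hu] using
      exists_mul_presMat_edgeRow_self ν τ g fun h => (hb u hu).ne (by rw [← h])
  choose! ε hε using hε
  have hτ : ∏ u ∈ U, τ (p u) = ∏ l, τ l ^ m l := by
    rw [← Finset.prod_fiberwise' U p τ]
    exact Finset.prod_congr rfl fun l _ => by rw [Finset.prod_const, hfib]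
  have hA : ∏ i ∈ A, d i = ∏ l ∈ A, ν l := Finset.prod_congr rfl fun i hi => by
    simp [d, forestRow, hi]
  have hC : ∏ i ∈ C, d i = g ^ #C := by
    rw [Finset.prod_congr rfl fun i hi => ?_, Finset.prod_const]
    simp [d, forestRow, hi, Finset.disjoint_right.1 hAC hi]
  have key : (∏ l ∈ A, ν l) * g ^ #C * ∏ l, τ l ^ m l =
      (∏ u ∈ U, ε u) * ((presMat ν τ g).submatrix (forestRow A C p) id).det := by
    rw [det_submatrix_forestRow ν τ g hb, ← Finset.prod_mul_prod_compl (A ∪ C) d,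
      Finset.prod_union hAC, hA, hC, ← hτ, ← Finset.prod_congr rfl hε, Finset.prod_mul_distrib]
    ring
  rw [key]
  exact Ideal.mul_mem_left _ _ (det_submatrix_mem_fittMat_zero _ _ id)

theorem prod_mul_pow_mul_prod_pow_mem_fittMat_of_one_le {A : Finset (Fin s)} {c : ℕ}
    (hc : 1 ≤ c) (m : Fin s → ℕ) (h : #A + c + ∑ l, m l = s) :
    (∏ l ∈ A, ν l) * g ^ c * ∏ l, τ l ^ m l ∈ fittMat (presMat ν τ g) 0 := by
  have hcompl : #Aᶜ = s - #A := by rw [Finset.card_compl, Fintype.card_fin]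
  obtain ⟨C, hCA, hCc, hroot⟩ : ∃ C ⊆ Aᶜ, #C = c ∧ (0 < ∑ l, m l → ∃ ρ ∈ A ∪ C, 0 < m ρ) := by
    by_cases hm : ∑ l, m l = 0
    · obtain ⟨C, hC, hCc⟩ := Finset.exists_subset_card_eq (show c ≤ #Aᶜ by omega)
      exact ⟨C, hC, hCc, by omega⟩
    · obtain ⟨j, -, hj⟩ := Finset.exists_ne_zero_of_sum_ne_zero hm
      obtain ⟨C, hjC, hC, hCc⟩ := Finset.exists_subsuperset_card_eq (s := {j} \ A)
        (fun x hx => Finset.mem_compl.2 (Finset.mem_sdiff.1 hx).2)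
        ((Finset.card_le_card Finset.sdiff_subset).trans (by simpa using hc))
        (show c ≤ #Aᶜ by omega)
      refine ⟨C, hC, hCc, fun _ => ⟨j, ?_, Nat.pos_of_ne_zero hj⟩⟩
      by_cases hjA : j ∈ A
      · exact Finset.mem_union_left _ hjA
      · exact Finset.mem_union_right _ (hjC (by simp [hjA]))
  have hAC : Disjoint A C := Finset.disjoint_right.2 fun l hl => Finset.mem_compl.1 (hCA hl)
  have hU : #(A ∪ C)ᶜ = ∑ l, m l := by
    rw [Finset.card_compl, Fintype.card_fin, Finset.card_union_of_disjoint hAC]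
    omega
  rw [← hCc]
  exact prod_mul_pow_mul_prod_pow_mem_fittMat ν τ g hAC m hU.symm
    fun hne => hroot (hU ▸ Finset.card_pos.2 hne)

theorem prod_pow_add_single (m : Fin s → ℕ) (l : Fin s) :
    ∏ l', τ l' ^ (m + Pi.single l 1 : Fin s → ℕ) l' = (∏ l', τ l' ^ m l') * τ l := by
  simp only [Pi.add_apply, pow_add, Finset.prod_mul_distrib]
  congr 1
  rw [Fintype.prod_eq_single l fun l' h => by rw [Pi.single_eq_of_ne h, pow_zero],
    Pi.single_eq_same, pow_one]

/-- Induction on `f`: a factor `δ` is traded, via `g - δ ∈ (ν_l, τ_l)` for some `l ∉ A`, for one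
more factor `g`, `ν_l` or `τ_l`. -/
theorem span_mul_pow_le_fittMat {δ : R} (hδ : ∀ l, g - δ ∈ Ideal.span {ν l, τ l}) (f : ℕ) :
    ∀ (A : Finset (Fin s)) (c : ℕ) (m : Fin s → ℕ), 1 ≤ c → #A + c + ∑ l, m l + f = s →
      Ideal.span {(∏ l ∈ A, ν l) * g ^ c * ∏ l, τ l ^ m l} *
        Ideal.span (insert δ (Set.range τ)) ^ f ≤ fittMat (presMat ν τ g) 0 := by
  induction f with
  | zero =>
    intro A c m hc hsum
    rw [pow_zero, mul_one, Ideal.span_singleton_le_iff_mem]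
    exact prod_mul_pow_mul_prod_pow_mem_fittMat_of_one_le ν τ g hc m (by omega)
  | succ f ih =>
    intro A c m hc hsum
    have hτ : ∀ l, (∏ l ∈ A, ν l) * g ^ c * (∏ l', τ l' ^ m l') * τ l =
        (∏ l ∈ A, ν l) * g ^ c * ∏ l', τ l' ^ (m + Pi.single l 1 : Fin s → ℕ) l' := by
      intro l
      rw [prod_pow_add_single, mul_assoc]
    have hτsum : ∀ l, ∑ l', (m + Pi.single l 1 : Fin s → ℕ) l' = ∑ l', m l' + 1 := by
      intro l; simp [Finset.sum_add_distrib]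
    rw [pow_succ', ← mul_assoc]
    refine Ideal.span_singleton_mul_span_mul_le fun t ht => ?_
    rcases ht with rfl | ⟨l, rfl⟩
    · obtain ⟨l₀, hl₀⟩ : ∃ l₀, l₀ ∉ A := by
        by_contra! h
        have := congrArg Finset.card (Finset.eq_univ_of_forall h)
        rw [Finset.card_univ, Fintype.card_fin] at this
        omega
      obtain ⟨a, b, hab⟩ := Ideal.mem_span_pair.1 (hδ l₀)
      rw [Ideal.span_singleton_mul_le_iff]
      intro z hz
      have hg := Ideal.span_singleton_mul_le_iff.1 (ih A (c + 1) m (by omega) (by omega)) z hz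
      have hν := Ideal.span_singleton_mul_le_iff.1
        (ih (insert l₀ A) c m hc (by rw [Finset.card_insert_of_notMem hl₀]; omega)) z hz
      have hτ₀ := Ideal.span_singleton_mul_le_iff.1
        (ih A c (m + Pi.single l₀ 1) hc (by rw [hτsum]; omega)) z hz
      set y := (∏ l ∈ A, ν l) * g ^ c * ∏ l, τ l ^ m l
      have hyδ : y * t * z = y * g * z - a * (y * ν l₀ * z) - b * (y * τ l₀ * z) := by
        linear_combination (y * z) * hab
      rw [hyδ]
      refine sub_mem (sub_mem ?_ (Ideal.mul_mem_left _ _ ?_)) (Ideal.mul_mem_left _ _ ?_)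
      · convert hg using 1; ring
      · convert hν using 1; rw [Finset.prod_insert hl₀]; ring
      · rwa [← hτ] at hτ₀
    · rw [hτ]
      exact ih A c _ hc (by rw [hτsum]; omega)

/-- The ideal `Z_i` of the theorem, for arbitrary `ν_l`. -/
def prodIdeal (i : ℕ) : Ideal R :=
  Ideal.span {x | ∃ T : Finset (Fin s), #T = s - i ∧ x = ∏ l ∈ T, ν l}

/-- The ideal `𝓙` of the theorem, with `K` in place of `𝓘_D`. -/
def jIdeal (K : Ideal R) : Ideal R :=
  ∑ i ∈ Finset.range s, prodIdeal ν (i + 1) * K ^ i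

theorem prodIdeal_mul_pow_le_jIdeal (K : Ideal R) {i : ℕ} (hi : i < s) :
    prodIdeal ν (i + 1) * K ^ i ≤ jIdeal ν K :=
  Finset.single_le_sum (f := fun i => prodIdeal ν (i + 1) * K ^ i) (fun _ _ => bot_le)
    (Finset.mem_range.2 hi)

theorem span_prod_le_prodIdeal (A : Finset (Fin s)) :
    Ideal.span {∏ l ∈ A, ν l} ≤ prodIdeal ν (s - #A) := by
  refine Ideal.span_le.2 (Set.singleton_subset_iff.2 (Ideal.subset_span ⟨A, ?_, rfl⟩))
  have := A.card_le_univ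
  rw [Fintype.card_fin] at this
  omega

theorem prod_mem_jIdeal (K : Ideal R) (hs : 0 < s) : ∏ l, ν l ∈ jIdeal ν K := by
  have h := prodIdeal_mul_pow_le_jIdeal ν K hs
  rw [pow_zero, mul_one] at h
  refine h ?_
  rw [← Finset.mul_prod_erase _ _ (Finset.mem_univ ⟨0, hs⟩)]
  refine Ideal.mul_mem_left _ _ (Ideal.subset_span ⟨_, ?_, rfl⟩)
  simp

theorem prod_mul_eq_zero_of_mem_span (hντ : ∀ l, ν l * τ l = 0) {x : R}
    (hx : x ∈ Ideal.span (Set.range τ)) : (∏ l, ν l) * x = 0 := by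
  obtain ⟨a, rfl⟩ := Ideal.mem_span_range_iff_exists_fun.1 hx
  rw [Finset.mul_sum]
  refine Finset.sum_eq_zero fun l _ => ?_
  rw [← Finset.mul_prod_erase _ _ (Finset.mem_univ l)]
  linear_combination (a l * ∏ l' ∈ Finset.univ.erase l, ν l') * hντ l

theorem prod_mem_fittMat_presMat : ∏ l, ν l ∈ fittMat (presMat ν τ g) 0 := by
  simpa using prod_mul_pow_mul_prod_pow_mem_fittMat ν τ g (Finset.disjoint_empty_right Finset.univ)
    0 (by simp) (by simp)

theorem span_mul_jIdeal_le_fittMat {δ : R} (hδ : ∀ l, g - δ ∈ Ideal.span {ν l, τ l}) :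
    Ideal.span {g} * jIdeal ν (Ideal.span (insert δ (Set.range τ))) ≤
      fittMat (presMat ν τ g) 0 := by
  rw [jIdeal, Finset.mul_sum]
  refine Ideal.sum_le_of_forall fun i hi => ?_
  rw [prodIdeal, ← mul_assoc]
  refine Ideal.span_singleton_mul_span_mul_le fun t ⟨T, hT, ht⟩ => ?_
  have hi := Finset.mem_range.1 hi
  simpa [ht, mul_comm] using span_mul_pow_le_fittMat ν τ g hδ i T 1 0 le_rfl (by simp; omega)

def rowIdeal : (Fin s ⊕ rowPairs s) ⊕ Fin s → Ideal R :=
  Sum.elim (Sum.elim (fun l => Ideal.span {ν l}) fun _ => Ideal.span (Set.range τ))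
    fun _ => Ideal.span {g}

theorem presMat_mem_rowIdeal (x : (Fin s ⊕ rowPairs s) ⊕ Fin s) (j : Fin s) :
    presMat ν τ g x j ∈ rowIdeal ν τ g x := by
  rcases x with (l | p) | l
  · simp only [presMat_inl_inl]
    split_ifs
    · exact Ideal.mem_span_singleton_self _
    · exact zero_mem _
  · exact Nmat_mem_span_range τ p j
  · simp only [presMat_inr]
    split_ifs
    · exact Ideal.mem_span_singleton_self _
    · exact zero_mem _

theorem exists_prod_rowIdeal_eq {r : Fin s → (Fin s ⊕ rowPairs s) ⊕ Fin s}
    (hr : Function.Injective r) :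
    ∃ (A : Finset (Fin s)) (d c : ℕ), #A + d + c = s ∧ ((∃ i l, r i = .inr l) → 1 ≤ c) ∧
      ((∀ i p, r i ≠ .inl (.inr p)) → d = 0) ∧
      ∏ i, rowIdeal ν τ g (r i) =
        Ideal.span {∏ l ∈ A, ν l} * Ideal.span (Set.range τ) ^ d * Ideal.span {g} ^ c := by
  set S := Finset.univ.map ⟨r, hr⟩
  refine ⟨S.toLeft.toLeft, #S.toLeft.toRight, #S.toRight, ?_, ?_, ?_, ?_⟩
  · rw [Finset.card_toLeft_add_card_toRight, Finset.card_toLeft_add_card_toRight]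
    simp [S]
  · rintro ⟨i, l, hi⟩
    exact Finset.card_pos.2 ⟨l, Finset.mem_toRight.2 (Finset.mem_map.2 ⟨i, by simp, hi⟩)⟩
  · intro h
    refine Finset.card_eq_zero.2 (Finset.eq_empty_of_forall_notMem fun p hp => ?_)
    obtain ⟨i, -, hi⟩ := Finset.mem_map.1 (Finset.mem_toLeft.1 (Finset.mem_toRight.1 hp))
    exact h i p hi
  · rw [show ∏ i, rowIdeal ν τ g (r i) = ∏ x ∈ S, rowIdeal ν τ g x from
        (Finset.prod_map Finset.univ ⟨r, hr⟩ (rowIdeal ν τ g)).symm, ← S.toLeft_disjSum_toRight,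
      Finset.prod_disjSum, ← S.toLeft.toLeft_disjSum_toRight, Finset.prod_disjSum]
    simp [rowIdeal, Ideal.prod_span_singleton]

theorem span_prod_mul_pow_mul_pow_le_jIdeal {K : Ideal R} (hτK : Ideal.span (Set.range τ) ≤ K)
    (hg : g ∈ K ⊔ Ideal.span {∏ l, ν l})
    (hντ : ∀ x ∈ Ideal.span (Set.range τ), (∏ l, ν l) * x = 0)
    {A : Finset (Fin s)} {d c : ℕ} (h : #A + d + (c + 1) = s) :
    Ideal.span {∏ l ∈ A, ν l} * Ideal.span (Set.range τ) ^ d * Ideal.span {g} ^ c ≤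
      jIdeal ν K := by
  set T := Ideal.span (Set.range τ)
  have hgc : Ideal.span {g} ^ c ≤ K ^ c ⊔ Ideal.span {∏ l, ν l} :=
    (Ideal.pow_right_mono (Ideal.span_singleton_le_iff_mem _ |>.2 hg) c).trans
      (Ideal.sup_pow_le_pow_sup _ _ c)
  refine (Ideal.mul_mono_right hgc).trans ?_
  rw [Ideal.mul_sup]
  refine sup_le ?_ ?_
  · have hA : s - #A = d + c + 1 := by omega
    calc Ideal.span {∏ l ∈ A, ν l} * T ^ d * K ^ c
        ≤ prodIdeal ν (d + c + 1) * K ^ d * K ^ c :=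
          Ideal.mul_mono_left (Ideal.mul_mono (hA ▸ span_prod_le_prodIdeal ν A)
            (Ideal.pow_right_mono hτK d))
      _ = prodIdeal ν (d + c + 1) * K ^ (d + c) := by rw [mul_assoc, pow_add]
      _ ≤ jIdeal ν K := prodIdeal_mul_pow_le_jIdeal ν K (by omega)
  · rcases Nat.eq_zero_or_pos d with rfl | hd
    · rw [pow_zero, mul_one]
      exact Ideal.mul_le_right.trans (Ideal.span_singleton_le_iff_mem _ |>.2
        (prod_mem_jIdeal ν K (by omega)))
    · calc Ideal.span {∏ l ∈ A, ν l} * T ^ d * Ideal.span {∏ l, ν l}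
          ≤ T * Ideal.span {∏ l, ν l} :=
            Ideal.mul_mono_left (Ideal.mul_le_right.trans (Ideal.pow_le_self hd.ne'))
        _ ≤ jIdeal ν K := Ideal.mul_le.2 fun a ha b hb => by
            obtain ⟨k, rfl⟩ := Ideal.mem_span_singleton'.1 hb
            rw [show a * (k * ∏ l, ν l) = k * ((∏ l, ν l) * a) by ring, hντ a ha, mul_zero]
            exact zero_mem _

theorem mul_det_eq_zero_of_forall_ne_inr (hντ : ∀ l, ν l * τ l = 0)
    {r : Fin s → (Fin s ⊕ rowPairs s) ⊕ Fin s} {c : Fin s → Fin s} (hc : c.Bijective)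
    (hr : ∀ i l, r i ≠ .inr l) {x : R} (hx : x ∈ Ideal.span (Set.range τ)) :
    x * ((presMat ν τ g).submatrix r c).det = 0 := by
  set e := Equiv.ofBijective c hc
  have hmul : (presMat ν τ g).submatrix r c *ᵥ (τ ∘ c) = 0 := by
    change (presMat ν τ g).submatrix r e *ᵥ (τ ∘ e) = 0
    rw [Matrix.submatrix_mulVec_equiv, Function.comp_assoc, e.self_comp_symm, Function.comp_id]
    ext i
    rcases hri : r i with x | l
    · simp only [Function.comp_apply, hri, Pi.zero_apply]
      exact congrFun (Mmat_mulVec_self ν τ hντ) x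
    · exact absurd hri (hr i l)
  have hτ : ∀ l, τ l * ((presMat ν τ g).submatrix r c).det = 0 := fun l => by
    obtain ⟨k, rfl⟩ := hc.2 l
    exact Matrix.mul_det_eq_zero_of_mulVec_eq_zero _ hmul k
  obtain ⟨a, rfl⟩ := Ideal.mem_span_range_iff_exists_fun.1 hx
  rw [Finset.sum_mul]
  exact Finset.sum_eq_zero fun l _ => by rw [mul_assoc, hτ, mul_zero]

theorem prod_rowIdeal_le_sup {K : Ideal R} (hτK : Ideal.span (Set.range τ) ≤ K)
    (hg : g ∈ K ⊔ Ideal.span {∏ l, ν l})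
    (hνT : ∀ x ∈ Ideal.span (Set.range τ), (∏ l, ν l) * x = 0)
    {r : Fin s → (Fin s ⊕ rowPairs s) ⊕ Fin s} (hr : Function.Injective r)
    (hrows : (∃ i l, r i = .inr l) ∨ ∀ i p, r i ≠ .inl (.inr p)) :
    ∏ i, rowIdeal ν τ g (r i) ≤ Ideal.span {∏ l, ν l} ⊔ Ideal.span {g} * jIdeal ν K := by
  obtain ⟨A, d, k, hcard, hk1, hd0, heq⟩ := exists_prod_rowIdeal_eq ν τ g hr
  rw [heq]
  rcases k with _ | k
  · obtain rfl : d = 0 := hrows.elim (fun h' => absurd (hk1 h') (by omega)) hd0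
    rw [Finset.eq_univ_of_card A (by simp; omega), pow_zero, pow_zero, mul_one, mul_one]
    exact le_sup_left
  · refine le_sup_of_le_right (le_of_eq_of_le (by ring) (Ideal.mul_mono_right
      (span_prod_mul_pow_mul_pow_le_jIdeal ν τ g hτK hg hνT (d := d) (c := k) (by omega))))

/-- A minor with an edge row but no `g`-row is killed by `h`; any other minor lies in `(∏ ν_l)`
or in `g 𝓙`. -/
theorem span_mul_fittMat_presMat_le {K P : Ideal R} {h : R} (hντ : ∀ l, ν l * τ l = 0)
    (hτK : Ideal.span (Set.range τ) ≤ K) (hg : g ∈ K ⊔ Ideal.span {∏ l, ν l})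
    (hh : h - g * ∏ l, ν l ∈ Ideal.span (Set.range τ))
    (hP : Ideal.span {h} * (Ideal.span {∏ l, ν l} ⊔ Ideal.span {g} * jIdeal ν K) ≤ P) :
    Ideal.span {h} * fittMat (presMat ν τ g) 0 ≤ P := by
  have hνT : ∀ x ∈ Ideal.span (Set.range τ), (∏ l, ν l) * x = 0 :=
    fun _ hx => prod_mul_eq_zero_of_mem_span ν τ hντ hx
  refine Ideal.span_singleton_mul_le_iff.2 fun z hz => mul_comm z h ▸
    Submodule.mem_colon_singleton.1 (fittMat_zero_le _ (fun r c => ?_) hz)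
  rw [Submodule.mem_colon_singleton, smul_eq_mul, mul_comm]
  set M := (presMat ν τ g).submatrix r c
  by_cases hc : Function.Injective c
  swap
  · obtain ⟨i, j, hij, hne⟩ := Function.not_injective_iff.1 hc
    rw [Matrix.det_zero_of_column_eq hne fun k => by simp [M, hij], mul_zero]
    exact zero_mem _
  by_cases hr : Function.Injective r
  swap
  · obtain ⟨i, j, hij, hne⟩ := Function.not_injective_iff.1 hr
    rw [Matrix.det_zero_of_row_eq hne (by ext k; simp [M, hij]), mul_zero]
    exact zero_mem _
  have hdet : M.det ∈ ∏ i, rowIdeal ν τ g (r i) :=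
    Matrix.det_mem_prod_of_forall_mem _ _ fun i j => presMat_mem_rowIdeal ν τ g (r i) (c j)
  by_cases hrows : (∃ i l, r i = .inr l) ∨ ∀ i p, r i ≠ .inl (.inr p)
  · exact hP (Ideal.mul_mem_mul (Ideal.mem_span_singleton_self h)
      (prod_rowIdeal_le_sup ν τ g hτK hg hνT hr hrows hdet))
  push Not at hrows
  obtain ⟨hnog, i₀, p₀, hi₀⟩ := hrows
  have hνM : (∏ l, ν l) * M.det = 0 := by
    have := (Ideal.prod_le_inf.trans (Finset.inf_le (Finset.mem_univ i₀))) hdet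
    rw [hi₀] at this
    exact hνT _ this
  have hM := mul_det_eq_zero_of_forall_ne_inr ν τ g hντ (Finite.injective_iff_bijective.1 hc)
    hnog hh
  rw [show h * M.det = 0 by linear_combination hM + g * hνM]
  exact zero_mem _

variable (n u : R)

theorem span_mul_fittMat_presMat_ge (hνsq : (∏ l, ν l) * ∏ l, ν l = n * ∏ l, ν l)
    (hnl : ∀ l, n ∈ Ideal.span {ν l, τ l}) :
    Ideal.span {1 - u + n} * (Ideal.span {n * ∏ l, ν l} + Ideal.span {n - (∏ l, ν l) * u} *
      jIdeal ν (Ideal.span (insert (1 - u) (Set.range τ)))) ≤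
        Ideal.span {n - (∏ l, ν l) * u + n * ∏ l, ν l} * fittMat (presMat ν τ (1 - u + n)) 0 := by
  set νI := ∏ l, ν l
  have hF := prod_mem_fittMat_presMat ν τ (1 - u + n)
  have hgJ := span_mul_jIdeal_le_fittMat ν τ (1 - u + n) (δ := 1 - u)
    fun l => by simpa using hnl l
  rw [mul_add]
  refine sup_le ?_ ?_
  · rw [Ideal.span_singleton_mul_span_singleton, Ideal.span_singleton_le_iff_mem,
      show (1 - u + n) * (n * νI) = (n - νI * u + n * νI) * νI by
        linear_combination (u - n) * hνsq]
    exact Ideal.mul_mem_mul (Ideal.mem_span_singleton_self _) hF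
  · rw [← mul_assoc, Ideal.span_singleton_mul_span_singleton,
      show (1 - u + n) * (n - νI * u) = (n - νI * u + n * νI) * (1 - u + n - νI) by
        linear_combination (n - u) * hνsq,
      ← Ideal.span_singleton_mul_span_singleton, mul_assoc]
    refine Ideal.mul_mono_right (Ideal.span_singleton_mul_le_iff.2 fun w hw => ?_)
    rw [sub_mul]
    exact sub_mem (hgJ (Ideal.mul_mem_mul (Ideal.mem_span_singleton_self _) hw))
      (Ideal.mul_mem_right _ _ hF)

theorem span_mul_fittMat_presMat_eq (hντ : ∀ l, ν l * τ l = 0)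
    (hn : n - ∏ l, ν l ∈ Ideal.span (Set.range τ)) (hnl : ∀ l, n ∈ Ideal.span {ν l, τ l}) :
    Ideal.span {n - (∏ l, ν l) * u + n * ∏ l, ν l} * fittMat (presMat ν τ (1 - u + n)) 0 =
      Ideal.span {1 - u + n} * (Ideal.span {n * ∏ l, ν l} + Ideal.span {n - (∏ l, ν l) * u} *
        jIdeal ν (Ideal.span (insert (1 - u) (Set.range τ)))) := by
  set νI := ∏ l, ν l
  have hνsq : νI * νI = n * νI := by
    linear_combination -(prod_mul_eq_zero_of_mem_span ν τ hντ hn)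
  have hτK : Ideal.span (Set.range τ) ≤ Ideal.span (insert (1 - u) (Set.range τ)) :=
    Ideal.span_mono (Set.subset_insert _ _)
  refine le_antisymm (span_mul_fittMat_presMat_le ν τ _ hντ hτK ?_ ?_ ?_)
    (span_mul_fittMat_presMat_ge ν τ n u hνsq hnl)
  · rw [show 1 - u + n = (1 - u) + (n - νI) + νI by ring]
    exact add_mem (add_mem (Submodule.mem_sup_left (Ideal.subset_span (Set.mem_insert _ _)))
      (Submodule.mem_sup_left (hτK hn)))
      (Submodule.mem_sup_right (Ideal.mem_span_singleton_self _))
  · convert hn using 1; ring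
  rw [Ideal.mul_sup]
  refine sup_le ?_ (Ideal.span_singleton_mul_le_iff.2 fun z hz => ?_)
  · rw [Ideal.span_singleton_mul_span_singleton, Ideal.span_singleton_le_iff_mem,
      show (n - νI * u + n * νI) * νI = (1 - u + n) * (n * νI) by
        linear_combination (n - u) * hνsq]
    exact Ideal.mul_mem_mul (Ideal.mem_span_singleton_self _)
      (Submodule.mem_sup_left (Ideal.mem_span_singleton_self _))
  · obtain ⟨w, hw, rfl⟩ := Ideal.mem_span_singleton_mul.1 hz
    rw [show (n - νI * u + n * νI) * ((1 - u + n) * w) =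
      (1 - u + n) * ((n * νI) * w + (n - νI * u) * w) by ring]
    exact Ideal.mul_mem_mul (Ideal.mem_span_singleton_self _) (add_mem
      (Submodule.mem_sup_left (Ideal.mul_mem_right _ _ (Ideal.mem_span_singleton_self _)))
      (Submodule.mem_sup_right (Ideal.mul_mem_mul (Ideal.mem_span_singleton_self _) hw)))

end PresentationMatrix

section GroupRing

variable {G : Type} [CommGroup G]

noncomputable def subOneMemSubgroup (J : Ideal (MonoidAlgebra ℤ G)) : Subgroup G :=
  MonoidHom.ker ((Ideal.Quotient.mk J : MonoidAlgebra ℤ G →+* _).toMonoidHom.comp (of ℤ G))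

theorem mem_subOneMemSubgroup {J : Ideal (MonoidAlgebra ℤ G)} {x : G} :
    x ∈ subOneMemSubgroup J ↔ of ℤ G x - 1 ∈ J := by
  rw [subOneMemSubgroup, MonoidHom.mem_ker, ← Ideal.Quotient.eq]
  simp

theorem IsDecomp.le_of_forall_mem {I : Subgroup G} {s : ℕ} {σ : Fin s → G}
    (hdec : IsDecomp I σ) {K : Subgroup G} (hK : ∀ l, σ l ∈ K) : I ≤ K := by
  intro g hg
  obtain ⟨x, hx, -⟩ := hdec.2 g hg
  rw [← hx]
  exact prod_mem fun l _ => Subgroup.zpowers_le.2 (hK l) (x l).2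

variable [Fintype G]

open scoped Classical in
theorem nuElt_eq_sum (H : Subgroup G) : nuElt ℤ H = ∑ h : H, of ℤ G h :=
  Finset.sum_subtype _ (by simp) _

theorem nuElt_mul_of {H : Subgroup G} {h : G} (hh : h ∈ H) :
    nuElt ℤ H * of ℤ G h = nuElt ℤ H := by
  classical
  rw [nuElt_eq_sum, Finset.sum_mul]
  exact Fintype.sum_equiv (Equiv.mulRight ⟨h, hh⟩) _ _ fun x => by simp

theorem nuElt_mul_of_sub_one {H : Subgroup G} {h : G} (hh : h ∈ H) :
    nuElt ℤ H * (of ℤ G h - 1) = 0 := by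
  rw [mul_sub, nuElt_mul_of hh, mul_one, sub_self]

theorem natCard_sub_nuElt_mem {H : Subgroup G} {J : Ideal (MonoidAlgebra ℤ G)}
    (hJ : ∀ x ∈ H, of ℤ G x - 1 ∈ J) : (Nat.card H : MonoidAlgebra ℤ G) - nuElt ℤ H ∈ J := by
  classical
  rw [nuElt_eq_sum, Nat.card_eq_fintype_card, ← Finset.card_univ, Finset.cast_card,
    ← Finset.sum_sub_distrib]
  exact sum_mem fun x _ => by rw [← neg_sub]; exact neg_mem (hJ x x.2)

theorem kerIdeal_le {H : Subgroup G} {J : Ideal (MonoidAlgebra ℤ G)}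
    (hJ : ∀ x ∈ H, of ℤ G x - 1 ∈ J) : kerIdeal H ≤ J := by
  have hH : H ≤ subOneMemSubgroup J := fun x hx => mem_subOneMemSubgroup.2 (hJ x hx)
  let θ : G ⧸ H →* MonoidAlgebra ℤ G ⧸ J := QuotientGroup.lift H
    ((Ideal.Quotient.mk J : MonoidAlgebra ℤ G →+* _).toMonoidHom.comp (of ℤ G)) hH
  have hfac : ((MonoidAlgebra.lift ℤ (MonoidAlgebra ℤ G ⧸ J) (G ⧸ H) θ : _ →ₐ[ℤ] _) : _ →+* _).comp
      (mapDomainRingHom ℤ (QuotientGroup.mk' H)) = Ideal.Quotient.mk J := by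
    apply MonoidAlgebra.ringHom_ext <;> intro r
    · have hr : (single 1 r : MonoidAlgebra ℤ G) = r := by
        rw [MonoidAlgebra.intCast_def, Int.cast_id]
      simp [hr]
    · simp [θ]
  intro x hx
  rw [← Ideal.Quotient.eq_zero_iff_mem, ← hfac, RingHom.comp_apply, RingHom.mem_ker.1 hx, map_zero]

theorem of_sub_one_mem_kerIdeal {H : Subgroup G} {x : G} (hx : x ∈ H) :
    of ℤ G x - 1 ∈ kerIdeal H := by
  rw [kerIdeal, RingHom.mem_ker, map_sub, map_one, sub_eq_zero]
  simp [of_apply, mapDomain_single, (QuotientGroup.eq_one_iff x).2 hx, one_def]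

variable {I : Subgroup G} {s : ℕ} {σ : Fin s → G}

theorem IsDecomp.nuElt_eq_prod (hdec : IsDecomp I σ) :
    nuElt ℤ I = ∏ l, nuElt ℤ (Subgroup.zpowers (σ l)) := by
  classical
  simp_rw [nuElt_eq_sum]
  rw [Finset.prod_univ_sum, Fintype.piFinset_univ]
  have hmem : ∀ x : ∀ l, Subgroup.zpowers (σ l), ∏ l, (x l : G) ∈ I := fun x =>
    prod_mem fun l _ => Subgroup.zpowers_le.2 (hdec.1 l) (x l).2
  let e : (∀ l, Subgroup.zpowers (σ l)) → I := fun x => ⟨∏ l, (x l : G), hmem x⟩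
  have he : Function.Bijective e := by
    refine ⟨fun x y hxy => ?_, fun g => ?_⟩
    · obtain ⟨z, -, hz⟩ := hdec.2 _ (hmem y)
      exact (hz x (congrArg Subtype.val hxy)).trans (hz y rfl).symm
    · obtain ⟨x, hx, -⟩ := hdec.2 g g.2
      exact ⟨x, Subtype.ext hx⟩
  exact (Fintype.sum_bijective e he _ _ fun x => by simp [e, map_prod]).symm

theorem IsDecomp.natCard_sub_nuElt_mem_span (hdec : IsDecomp I σ) :
    (Nat.card I : MonoidAlgebra ℤ G) - nuElt ℤ I ∈
      Ideal.span (Set.range fun l => of ℤ G (σ l) - 1) :=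
  natCard_sub_nuElt_mem fun _ hx => mem_subOneMemSubgroup.1 <|
    hdec.le_of_forall_mem
      (fun l => mem_subOneMemSubgroup.2 (Ideal.subset_span (Set.mem_range_self l))) hx

theorem IsDecomp.natCard_mem_span_pair (hdec : IsDecomp I σ) (l : Fin s) :
    (Nat.card I : MonoidAlgebra ℤ G) ∈
      Ideal.span {nuElt ℤ (Subgroup.zpowers (σ l)), of ℤ G (σ l) - 1} := by
  obtain ⟨k, hk⟩ := Subgroup.card_dvd_of_le (Subgroup.zpowers_le.2 (hdec.1 l))
  have hl : (Nat.card (Subgroup.zpowers (σ l)) : MonoidAlgebra ℤ G) -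
      nuElt ℤ (Subgroup.zpowers (σ l)) ∈ Ideal.span {of ℤ G (σ l) - 1} :=
    natCard_sub_nuElt_mem fun _ hx => mem_subOneMemSubgroup.1 <|
      Subgroup.zpowers_le.2 (mem_subOneMemSubgroup.2 (Ideal.mem_span_singleton_self _)) hx
  obtain ⟨a, ha⟩ := Ideal.mem_span_singleton'.1 hl
  rw [hk, Nat.cast_mul]
  exact Ideal.mem_span_pair.2 ⟨k, k * a, by linear_combination (k : MonoidAlgebra ℤ G) * ha⟩

theorem IsDecomp.kerIdeal_eq_span {D : Subgroup G} (hdec : IsDecomp I σ) (hID : I ≤ D) {φt : G}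
    (hφt : φt ∈ D) (hφgen : ∀ d ∈ D, ∃ n : ℤ, φt ^ n * d⁻¹ ∈ I) :
    kerIdeal D = Ideal.span (insert (1 - of ℤ G φt⁻¹) (Set.range fun l => of ℤ G (σ l) - 1)) := by
  set J := Ideal.span (insert (1 - of ℤ G φt⁻¹) (Set.range fun l => of ℤ G (σ l) - 1))
  refine le_antisymm (kerIdeal_le fun d hd => ?_) (Ideal.span_le.2 ?_)
  · have hI : I ≤ subOneMemSubgroup J := hdec.le_of_forall_mem fun l =>
      mem_subOneMemSubgroup.2 (Ideal.subset_span (Set.mem_insert_of_mem _ ⟨l, rfl⟩))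
    have hφ : φt ∈ subOneMemSubgroup J := by
      rw [← inv_mem_iff, mem_subOneMemSubgroup, ← neg_sub]
      exact neg_mem (Ideal.subset_span (Set.mem_insert _ _))
    obtain ⟨k, hk⟩ := hφgen d hd
    rw [← mem_subOneMemSubgroup, show d = (φt ^ k * d⁻¹)⁻¹ * φt ^ k by group]
    exact mul_mem (inv_mem (hI hk)) (zpow_mem hφ k)
  · rintro x (rfl | ⟨l, rfl⟩)
    · rw [← neg_sub]
      exact neg_mem (of_sub_one_mem_kerIdeal (inv_mem hφt))
    · exact of_sub_one_mem_kerIdeal (hID (hdec.1 l))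

end GroupRing

theorem statement0 {G : Type} [CommGroup G] [Fintype G] (I D : Subgroup G) (hID : I ≤ D)
    {s : ℕ} (σ : Fin s → G) (hdec : IsDecomp I σ)
    (φt : G) (hφt : φt ∈ D) (hφgen : ∀ d ∈ D, ∃ n : ℤ, φt ^ n * d⁻¹ ∈ I) :
    Ideal.span {(Nat.card I : MonoidAlgebra ℤ G)
          - nuElt ℤ I * MonoidAlgebra.of ℤ G φt⁻¹
          + (Nat.card I : MonoidAlgebra ℤ G) * nuElt ℤ I} *
      fittMat (Sum.elim
        (Mmat (fun l => nuElt ℤ (Subgroup.zpowers (σ l)))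
          (fun l => MonoidAlgebra.of ℤ G (σ l) - 1))
        (fun l l' => if l' = l then
            1 - MonoidAlgebra.of ℤ G φt⁻¹ + (Nat.card I : MonoidAlgebra ℤ G)
          else 0)) 0
    = Ideal.span {1 - MonoidAlgebra.of ℤ G φt⁻¹ + (Nat.card I : MonoidAlgebra ℤ G)} *
      (Ideal.span {(Nat.card I : MonoidAlgebra ℤ G) * nuElt ℤ I} +
        Ideal.span {(Nat.card I : MonoidAlgebra ℤ G)
            - nuElt ℤ I * MonoidAlgebra.of ℤ G φt⁻¹} *
          ∑ i ∈ Finset.range s, Zideal σ (i + 1) * (kerIdeal D) ^ i) := by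
  have hn := hdec.natCard_sub_nuElt_mem_span
  rw [hdec.nuElt_eq_prod] at hn ⊢
  rw [hdec.kerIdeal_eq_span hID hφt hφgen]
  exact span_mul_fittMat_presMat_eq _ _ _ _
    (fun l => nuElt_mul_of_sub_one (Subgroup.mem_zpowers _)) hn hdec.natCard_mem_span_pair
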